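/- Let G be a finite simple 3-regular bipartite graph on exactly 2h+8 vertices (h a natural number) having exactly six cycles of length 4, any two distinct 4-cycles of G sharing at most one edge. Then the number of paths of length 5 in G satisfies N(P₅) = 48h + 120. -/

import Mathlib

open SimpleGraph

/-- The number of `k`-matchings of a graph `G`: `k`-element sets of pairwise disjoint
edges of `G`, identified with the matching subgraphs of `G` having exactly `k` edges. -/
noncomputable def numMatchings {V : Type*} (G : SimpleGraph V) (k : ℕ) : ℕ :=
  Set.ncard {H : G.Subgraph | H.IsMatching ∧ H.edgeSet.ncard = k}

/-- The number of subgraphs of `G` isomorphic to the graph `X`. -/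
noncomputable def numSubgraphs {V W : Type*} (G : SimpleGraph V) (X : SimpleGraph W) : ℕ :=
  Set.ncard {H : G.Subgraph | Nonempty (H.coe ≃g X)}

/-!
Count ordered paths, i.e. injective vertex sequences `v₀ v₁ … v_k` with consecutive vertices
adjacent. In a `d`-regular graph an ordered `k`-path extends at `v₀` in `d - m` ways, where `m`
is the number of path vertices adjacent to `v₀`. In a bipartite graph only the `v_i` with `i` odd
can be adjacent to `v₀`; for `k ≤ 4` these are `v₁`, which always is, and `v₃`, which is exactly
when `v₀ v₁ v₂ v₃` is an ordered 4-cycle. With `n` vertices and `C` ordered 4-cycles this gives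
`3n, 6n, 12n, 24n - C` ordered paths with `1, …, 4` edges and `48n - 3C` with 5 edges.
Each 4-cycle subgraph carries `|Aut C₄| = 8` ordered 4-cycles and each `P₅`-subgraph
`|Aut P₅| = 2` ordered paths, so `C = 48` and `N(P₅) = (48n - 144) / 2 = 48h + 120`.
-/

open Finset Function

namespace SimpleGraph

section Copies

variable {α β : Type*} {A : SimpleGraph α} {B : SimpleGraph β}

lemma Subgraph.toSubgraph_coeCopy_comp {H : B.Subgraph} (φ : A ≃g H.coe) :
    (H.coeCopy.comp φ.toCopy).toSubgraph = H := by
  rw [Copy.toSubgraph, show (H.coeCopy.comp φ.toCopy).toHom = H.hom.comp φ.toHom from rfl,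
    Subgraph.map_comp]
  simp

lemma Copy.coeCopy_comp_isoToSubgraph (f : Copy A B) :
    f.toSubgraph.coeCopy.comp f.isoToSubgraph.toCopy = f :=
  rfl

lemma natCard_copy_toSubgraph_eq {H : B.Subgraph} (e : A ≃g H.coe) :
    Nat.card {f : Copy A B // f.toSubgraph = H} = Nat.card (A ≃g A) := by
  refine (Nat.card_eq_of_bijective
    (fun σ : A ≃g A => ⟨H.coeCopy.comp (e.comp σ).toCopy, Subgraph.toSubgraph_coeCopy_comp _⟩)
    ⟨fun σ τ hστ => ?_, fun ⟨f, hf⟩ => ?_⟩).symm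
  · ext a
    have := congrArg (fun f : {f : Copy A B // f.toSubgraph = H} => f.1 a) hστ
    simpa [Subgraph.coeCopy] using Subtype.ext this
  · subst hf
    refine ⟨e.symm.comp f.isoToSubgraph, Subtype.ext ?_⟩
    conv_rhs => rw [← f.coeCopy_comp_isoToSubgraph]
    ext a
    simp [Subgraph.coeCopy]

lemma natCard_copy_eq_mul_numSubgraphs [Finite α] [Finite β] :
    Nat.card (Copy A B) = Nat.card (A ≃g A) * numSubgraphs B A := by
  let S := {H : B.Subgraph | Nonempty (H.coe ≃g A)}
  let image (f : Copy A B) : S := ⟨f.toSubgraph, ⟨f.isoToSubgraph.symm⟩⟩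
  have hfiber (H : S) : Nat.card {f // image f = H} = Nat.card (A ≃g A) := by
    obtain ⟨H, ⟨e⟩⟩ := H
    rw [← natCard_copy_toSubgraph_eq e.symm]
    exact Nat.card_congr (Equiv.subtypeEquivRight fun f => by simp [image, Subtype.ext_iff])
  have : Fintype S := Fintype.ofFinite S
  have : Finite (Copy A B) := Finite.of_injective _ DFunLike.coe_injective
  rw [← Nat.card_congr (Equiv.sigmaFiberEquiv image), Nat.card_sigma,
    sum_congr rfl fun H _ => hfiber H, sum_const, smul_eq_mul, card_univ,
    ← Nat.card_eq_fintype_card, mul_comm, numSubgraphs, Nat.card_coe_set_eq]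

lemma natCard_iso_self (A : SimpleGraph α) :
    Nat.card (A ≃g A) = Nat.card {σ : Equiv.Perm α // ∀ a b, A.Adj (σ a) (σ b) ↔ A.Adj a b} :=
  Nat.card_congr ⟨fun e => ⟨e.toEquiv, fun _ _ => e.map_rel_iff'⟩, fun σ => ⟨σ.1, σ.2 _ _⟩,
    fun _ => rfl, fun _ => rfl⟩

variable {V : Type*} {G : SimpleGraph V}

lemma natCard_copy_eq_natCard_injective_hom (A : SimpleGraph α) :
    Nat.card (Copy A G) =
      Nat.card {f : α → V // Injective f ∧ ∀ i j, A.Adj i j → G.Adj (f i) (f j)} :=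
  Nat.card_congr ⟨fun c => ⟨c, c.injective, fun _ _ => c.toHom.map_adj⟩,
    fun f => ⟨⟨f.1, f.2.2 _ _⟩, f.2.1⟩, fun _ => rfl, fun _ => rfl⟩

lemma pathGraph_hom_iff {k : ℕ} {f : Fin (k + 1) → V} :
    (∀ i j, (pathGraph (k + 1)).Adj i j → G.Adj (f i) (f j)) ↔
      ∀ i : Fin k, G.Adj (f i.castSucc) (f i.succ) := by
  refine ⟨fun h i => h _ _ (pathGraph_adj.2 (Or.inl (by simp))), fun h => ?_⟩
  suffices hsucc : ∀ i j : Fin (k + 1), (i : ℕ) + 1 = j → G.Adj (f i) (f j) by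
    intro i j hij
    rcases pathGraph_adj.1 hij with hij | hij
    exacts [hsucc i j hij, (hsucc j i hij).symm]
  intro i j hij
  obtain ⟨i', rfl, rfl⟩ : ∃ i' : Fin k, i'.castSucc = i ∧ i'.succ = j :=
    ⟨⟨i, by omega⟩, rfl, Fin.ext hij⟩
  exact h i'

lemma cycleGraph_four_hom_iff {f : Fin 4 → V} :
    (∀ i j, (cycleGraph 4).Adj i j → G.Adj (f i) (f j)) ↔
      (∀ i : Fin 3, G.Adj (f i.castSucc) (f i.succ)) ∧ G.Adj (f 0) (f 3) := by
  refine ⟨fun h => ⟨fun i => h _ _ (by fin_cases i <;> decide), h 0 3 (by decide)⟩, ?_⟩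
  rintro ⟨h, h03⟩ i j hij
  have h01 : G.Adj (f 0) (f 1) := h 0
  have h12 : G.Adj (f 1) (f 2) := h 1
  have h23 : G.Adj (f 2) (f 3) := h 2
  fin_cases i <;> fin_cases j <;> first
    | exact absurd hij (by decide)
    | assumption
    | exact Adj.symm (by assumption)

end Copies

section OrderedPaths

variable {V : Type*} [Fintype V] [DecidableEq V] (G : SimpleGraph V) [DecidableRel G.Adj]

def orderedPaths (k : ℕ) : Finset (Fin (k + 1) → V) :=
  {f | Injective f ∧ ∀ i : Fin k, G.Adj (f i.castSucc) (f i.succ)}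

def pathExtensions {k : ℕ} (g : Fin (k + 1) → V) : Finset V :=
  G.neighborFinset (g 0) \ univ.image g

variable {G} {k d : ℕ}

lemma mem_orderedPaths {f : Fin (k + 1) → V} :
    f ∈ orderedPaths G k ↔ Injective f ∧ ∀ i : Fin k, G.Adj (f i.castSucc) (f i.succ) := by
  simp [orderedPaths]

lemma cons_mem_orderedPaths {v : V} {g : Fin (k + 1) → V} :
    Fin.cons v g ∈ orderedPaths G (k + 1) ↔ g ∈ orderedPaths G k ∧ v ∈ pathExtensions G g := by
  simp only [mem_orderedPaths, pathExtensions, mem_sdiff, mem_neighborFinset, mem_image, mem_univ,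
    true_and, Fin.cons_injective_iff, Fin.forall_fin_succ, Fin.cons_succ,
    ← Fin.succ_castSucc, Set.mem_range]
  tauto

lemma tail_mem_orderedPaths {f : Fin (k + 2) → V} (hf : f ∈ orderedPaths G (k + 1)) :
    Fin.tail f ∈ orderedPaths G k := by
  rw [← Fin.cons_self_tail f, cons_mem_orderedPaths] at hf
  exact hf.1

lemma card_filter_tail_mem {s : Finset (Fin (k + 1) → V)} (hs : s ⊆ orderedPaths G k) :
    #{f ∈ orderedPaths G (k + 1) | (Fin.tail f : Fin (k + 1) → V) ∈ s} =
      ∑ g ∈ s, #(pathExtensions G g) := by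
  rw [← card_sigma]
  refine card_nbij' (fun f => ⟨Fin.tail f, f 0⟩) (fun p => Fin.cons p.2 p.1) ?_ ?_ ?_ ?_
  · intro f hf
    simp only [coe_filter, Set.mem_ofPred_eq] at hf
    rw [← Fin.cons_self_tail f, cons_mem_orderedPaths] at hf
    simpa using ⟨hf.2, hf.1.2⟩
  · rintro ⟨g, v⟩ hp
    simp only [coe_sigma, Set.mem_sigma_iff] at hp
    simpa [cons_mem_orderedPaths] using ⟨⟨hs hp.1, hp.2⟩, hp.1⟩
  · intro f _
    exact Fin.cons_self_tail f
  · rintro ⟨g, v⟩ _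
    simp

lemma card_pathExtensions_add_card_adj {g : Fin (k + 1) → V} (hreg : G.IsRegularOfDegree d)
    (hg : Injective g) : #(pathExtensions G g) + #{i | G.Adj (g 0) (g i)} = d := by
  have : G.neighborFinset (g 0) ∩ univ.image g =
      ({i | G.Adj (g 0) (g i)} : Finset (Fin (k + 1))).image g := by
    ext v
    simp only [mem_inter, mem_neighborFinset, mem_image, mem_univ, true_and, mem_filter]
    constructor
    · rintro ⟨hv, i, rfl⟩
      exact ⟨i, hv, rfl⟩
    · rintro ⟨i, hi, rfl⟩
      exact ⟨hi, i, rfl⟩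
  rw [pathExtensions, ← card_image_of_injective _ hg, ← this, card_sdiff_add_card_inter,
    card_neighborFinset_eq_degree, hreg]

lemma card_filter_tail_mem_add (hreg : G.IsRegularOfDegree d) {s : Finset (Fin (k + 1) → V)}
    (hs : s ⊆ orderedPaths G k) :
    #{f ∈ orderedPaths G (k + 1) | (Fin.tail f : Fin (k + 1) → V) ∈ s} +
      ∑ i, #{g ∈ s | G.Adj (g 0) (g i)} = d * #s := by
  calc _ = ∑ g ∈ s, (#(pathExtensions G g) + #{i | G.Adj (g 0) (g i)}) := by
        rw [card_filter_tail_mem hs, sum_add_distrib]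
        simp only [card_filter]
        rw [sum_comm]
    _ = ∑ _g ∈ s, d := sum_congr rfl fun g hg =>
        card_pathExtensions_add_card_adj hreg (mem_orderedPaths.1 (hs hg)).1
    _ = d * #s := by rw [sum_const, smul_eq_mul, mul_comm]

lemma card_orderedPaths_zero : #(orderedPaths G 0) = Fintype.card V := by
  have : orderedPaths G 0 = univ := eq_univ_of_forall fun f =>
    mem_orderedPaths.2 ⟨injective_of_subsingleton (α := Fin 1) f, nofun⟩
  simp [this]

lemma adj_zero_one {f : Fin (k + 2) → V} (hf : f ∈ orderedPaths G (k + 1)) : G.Adj (f 0) (f 1) :=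
  (mem_orderedPaths.1 hf).2 0

lemma comp_rev_mem_orderedPaths {f : Fin (k + 1) → V} (hf : f ∈ orderedPaths G k) :
    f ∘ Fin.rev ∈ orderedPaths G k := by
  obtain ⟨hinj, hadj⟩ := mem_orderedPaths.1 hf
  refine mem_orderedPaths.2 ⟨hinj.comp Fin.rev_injective, fun i => ?_⟩
  simpa [Fin.rev_castSucc, Fin.rev_succ] using (hadj i.rev).symm

lemma not_adj_of_even_add (hbip : G.Colorable 2) {f : Fin (k + 1) → V}
    (hf : f ∈ orderedPaths G k) {i j : Fin (k + 1)} (hij : Even ((i : ℕ) + j)) :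
    ¬ G.Adj (f i) (f j) := by
  obtain ⟨c⟩ := hbip
  have hparity : ∀ i : Fin (k + 1), c (f i) = c (f 0) ↔ Even (i : ℕ) := by
    intro i
    induction i using Fin.induction with
    | zero => simp
    | succ i ih =>
      have hne := c.valid ((mem_orderedPaths.1 hf).2 i)
      have : ∀ x y z : Fin 2, x ≠ y → (y = z ↔ ¬ x = z) := by decide
      rw [Fin.val_succ, Nat.even_add_one, this _ _ _ hne, ih, Fin.val_castSucc]
  intro hadj
  apply c.valid hadj
  have : ∀ x y z : Fin 2, (x = z ↔ y = z) → x = y := by decide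
  exact this _ _ (c (f 0)) (by rw [hparity, hparity, ← Nat.even_add]; exact hij)

lemma card_filter_adj_eq_zero_of_even (hbip : G.Colorable 2) {s : Finset (Fin (k + 1) → V)}
    (hs : s ⊆ orderedPaths G k) {i j : Fin (k + 1)} (hij : Even ((i : ℕ) + j)) :
    #{g ∈ s | G.Adj (g i) (g j)} = 0 := by
  rw [card_eq_zero, filter_eq_empty_iff]
  exact fun g hg => not_adj_of_even_add hbip (hs hg) hij

lemma filter_adj_zero_one {s : Finset (Fin (k + 2) → V)} (hs : s ⊆ orderedPaths G (k + 1)) :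
    {g ∈ s | G.Adj (g 0) (g 1)} = s :=
  filter_true_of_mem fun _ hg => adj_zero_one (hs hg)

lemma card_orderedPaths_succ_add (hreg : G.IsRegularOfDegree d) :
    #(orderedPaths G (k + 1)) + ∑ i, #{g ∈ orderedPaths G k | G.Adj (g 0) (g i)} =
      d * #(orderedPaths G k) := by
  rw [← card_filter_tail_mem_add hreg subset_rfl,
    filter_true_of_mem fun _ hf => tail_mem_orderedPaths hf]

variable (G) in
def orderedFourCycles : Finset (Fin 4 → V) :=
  {f ∈ orderedPaths G 3 | G.Adj (f 0) (f 3)}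

lemma natCard_copy_pathGraph :
    Nat.card (Copy (pathGraph (k + 1)) G) = #(orderedPaths G k) := by
  simp only [natCard_copy_eq_natCard_injective_hom, pathGraph_hom_iff]
  rw [Nat.card_eq_fintype_card, Fintype.card_subtype]
  rfl

lemma natCard_copy_cycleGraph_four :
    Nat.card (Copy (cycleGraph 4) G) = #(orderedFourCycles G) := by
  simp only [natCard_copy_eq_natCard_injective_hom, cycleGraph_four_hom_iff, ← and_assoc]
  rw [Nat.card_eq_fintype_card, Fintype.card_subtype, orderedFourCycles, orderedPaths,
    filter_filter]

lemma card_orderedPaths_three (hreg : G.IsRegularOfDegree 3) (hbip : G.Colorable 2) :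
    #(orderedPaths G 3) = 12 * Fintype.card V := by
  have h1 : #(orderedPaths G 1) + ∑ i : Fin 1, #{g ∈ orderedPaths G 0 | G.Adj (g 0) (g i)} =
      3 * #(orderedPaths G 0) := card_orderedPaths_succ_add hreg
  have h2 : #(orderedPaths G 2) + ∑ i : Fin 2, #{g ∈ orderedPaths G 1 | G.Adj (g 0) (g i)} =
      3 * #(orderedPaths G 1) := card_orderedPaths_succ_add hreg
  have h3 : #(orderedPaths G 3) + ∑ i : Fin 3, #{g ∈ orderedPaths G 2 | G.Adj (g 0) (g i)} =
      3 * #(orderedPaths G 2) := card_orderedPaths_succ_add hreg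
  simp only [Fin.sum_univ_one, Fin.sum_univ_two, Fin.sum_univ_three, SimpleGraph.irrefl,
    filter_false, card_empty, filter_adj_zero_one subset_rfl,
    card_filter_adj_eq_zero_of_even hbip subset_rfl (k := 2) (i := 0) (j := 2) (by decide),
    card_orderedPaths_zero, Nat.reduceAdd] at h1 h2 h3
  omega

/-- Reversal turns these paths into the paths `u₀ u₁ u₂ u₃ u₄` with `u₁ u₂ u₃ u₄` an ordered
4-cycle, and then `u₀` is forced: it is the third neighbour of `u₁`. -/
lemma card_filter_adj_zero_three (hreg : G.IsRegularOfDegree 3) (hbip : G.Colorable 2) :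
    #{f ∈ orderedPaths G 4 | G.Adj (f 0) (f 3)} = #(orderedFourCycles G) := by
  have hC : orderedFourCycles G ⊆ orderedPaths G 3 := filter_subset _ _
  have hrev : #{f ∈ orderedPaths G 4 | G.Adj (f 0) (f 3)} =
      #{f ∈ orderedPaths G 4 | (Fin.tail f : Fin 4 → V) ∈ orderedFourCycles G} := by
    refine card_nbij' (· ∘ Fin.rev) (· ∘ Fin.rev) ?_ ?_ ?_ ?_
    · intro f hf
      simp only [coe_filter, Set.mem_ofPred_eq] at hf ⊢
      have hf' := comp_rev_mem_orderedPaths hf.1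
      exact ⟨hf', mem_filter.2 ⟨tail_mem_orderedPaths hf', hf.2.symm⟩⟩
    · intro f hf
      simp only [coe_filter, Set.mem_ofPred_eq, orderedFourCycles, mem_filter] at hf ⊢
      exact ⟨comp_rev_mem_orderedPaths hf.1, hf.2.2.symm⟩
    · intro f _
      funext i
      simp
    · intro f _
      funext i
      simp
  have h : #{f ∈ orderedPaths G 4 | (Fin.tail f : Fin 4 → V) ∈ orderedFourCycles G} +
      ∑ i : Fin 4, #{g ∈ orderedFourCycles G | G.Adj (g 0) (g i)} = 3 * #(orderedFourCycles G) :=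
    card_filter_tail_mem_add hreg hC
  simp only [Fin.sum_univ_four, SimpleGraph.irrefl, filter_false, card_empty,
    filter_adj_zero_one hC, card_filter_adj_eq_zero_of_even hbip hC (i := 0) (j := 2) (by decide),
    filter_true_of_mem (s := orderedFourCycles G) (p := fun g => G.Adj (g 0) (g 3))
      fun f hf => (mem_filter.1 hf).2] at h
  omega

lemma card_orderedPaths_five (hreg : G.IsRegularOfDegree 3) (hbip : G.Colorable 2) :
    #(orderedPaths G 5) + 3 * #(orderedFourCycles G) = 48 * Fintype.card V := by
  have h4 : #(orderedPaths G 4) + ∑ i : Fin 4, #{g ∈ orderedPaths G 3 | G.Adj (g 0) (g i)} =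
      3 * #(orderedPaths G 3) := card_orderedPaths_succ_add hreg
  have h5 : #(orderedPaths G 5) + ∑ i : Fin 5, #{g ∈ orderedPaths G 4 | G.Adj (g 0) (g i)} =
      3 * #(orderedPaths G 4) := card_orderedPaths_succ_add hreg
  simp only [Fin.sum_univ_four, Fin.sum_univ_five, SimpleGraph.irrefl, filter_false,
    card_empty, filter_adj_zero_one subset_rfl,
    card_filter_adj_eq_zero_of_even hbip subset_rfl (k := 3) (i := 0) (j := 2) (by decide),
    card_filter_adj_eq_zero_of_even hbip subset_rfl (k := 4) (i := 0) (j := 2) (by decide),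
    card_filter_adj_eq_zero_of_even hbip subset_rfl (k := 4) (i := 0) (j := 4) (by decide),
    card_filter_adj_zero_three hreg hbip, Nat.reduceAdd] at h4 h5
  have h3 := card_orderedPaths_three hreg hbip
  have hC : #{g ∈ orderedPaths G 3 | G.Adj (g 0) (g 3)} = #(orderedFourCycles G) := rfl
  linarith

end OrderedPaths

set_option maxRecDepth 20000 in
lemma natCard_iso_pathGraph_six : Nat.card (pathGraph 6 ≃g pathGraph 6) = 2 := by
  simp only [natCard_iso_self, pathGraph_adj]
  rw [Nat.card_eq_fintype_card, Fintype.card_subtype]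
  decide

lemma natCard_iso_cycleGraph_four : Nat.card (cycleGraph 4 ≃g cycleGraph 4) = 8 := by
  simp only [natCard_iso_self, cycleGraph_adj]
  rw [Nat.card_eq_fintype_card, Fintype.card_subtype]
  decide

end SimpleGraph

theorem stmt_10_general {V : Type*} [Fintype V] [DecidableEq V] (G : SimpleGraph V) [DecidableRel G.Adj]
    (hreg : G.IsRegularOfDegree 3) (hbip : G.Colorable 2) (h : ℕ)
    (hcard : Fintype.card V = 2 * h + 8)
    (hsix : numSubgraphs G (cycleGraph 4) = 6) :
    numSubgraphs G (pathGraph 6) = 48 * h + 120 := by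
  have hcycles : #(orderedFourCycles G) = 48 := by
    rw [← natCard_copy_cycleGraph_four, natCard_copy_eq_mul_numSubgraphs,
      natCard_iso_cycleGraph_four, hsix]
  have hpaths : #(orderedPaths G 5) = 2 * numSubgraphs G (pathGraph 6) := by
    rw [← natCard_copy_pathGraph, natCard_copy_eq_mul_numSubgraphs, natCard_iso_pathGraph_six]
  have := card_orderedPaths_five hreg hbip
  omega

theorem stmt_10 {V : Type*} [Fintype V] [DecidableEq V] (G : SimpleGraph V) [DecidableRel G.Adj]
    (hreg : G.IsRegularOfDegree 3) (hbip : G.Colorable 2) (h : ℕ)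
    (hcard : Fintype.card V = 2 * h + 8)
    (hsix : numSubgraphs G (cycleGraph 4) = 6)
    (hshare : ∀ H₁ H₂ : G.Subgraph, Nonempty (H₁.coe ≃g cycleGraph 4) →
      Nonempty (H₂.coe ≃g cycleGraph 4) → H₁ ≠ H₂ →
      (H₁.edgeSet ∩ H₂.edgeSet).ncard ≤ 1) :
    numSubgraphs G (pathGraph 6) = 48 * h + 120 :=
  stmt_10_general G hreg hbip h hcard hsix
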